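/- arXiv:1002.3566 — 3 statements merged into one kernel-verified Lean document; each statement's English description precedes it below -/
import Mathlib

section
/- If u : R^N → R is smooth and compactly supported, then the function x ↦ u(x) e^{-|x|^2/8} belongs to H^1(R^N); consequently for every s ∈ [2, 2N/(N-2)] (with N ≥ 3) there is a constant C_s > 0, independent of u, such that (∫_{R^N} |u(x)|^s e^{-s|x|^2/8} dx)^{2/s} ≤ C_s ∫_{R^N} (|∇u(x)|^2 + u(x)^2) e^{-|x|^2/4} dx. -/
open MeasureTheory Real Set
open scoped NNReal ENNReal

noncomputable section

namespace GaussianWeightedSobolevAux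

variable {N : ℕ}

local notation "E" => EuclideanSpace ℝ (Fin N)

lemma contDiff_wexp (c : ℝ) : ContDiff ℝ (⊤ : ℕ∞) (fun x : E => Real.exp (-‖x‖ ^ 2 / c)) :=
  Real.contDiff_exp.comp (((contDiff_norm_sq ℝ).neg).div_const c)

lemma hasFDerivAt_wexp (c : ℝ) (x : E) :
    HasFDerivAt (fun x : E => Real.exp (-‖x‖ ^ 2 / c))
      ((-(2 / c) * Real.exp (-‖x‖ ^ 2 / c)) • innerSL ℝ x) x := by
  have h0 : (fun x : E => Real.exp (-‖x‖ ^ 2 / c)) =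
      fun x : E => Real.exp ((-1/c) * ‖x‖ ^ 2) := by
    funext y; ring_nf
  have h1 : HasFDerivAt (fun x : E => (-1/c) * ‖x‖ ^ 2)
      ((-1/c) • (2 • innerSL ℝ x)) x :=
    (hasStrictFDerivAt_norm_sq x).hasFDerivAt.const_mul _
  have h2 := (Real.hasDerivAt_exp ((-1/c) * ‖x‖ ^ 2)).comp_hasFDerivAt x h1
  rw [h0]
  refine h2.congr_fderiv ?_
  · ext y
    simp [smul_smul]
    ring_nf

lemma fderiv_wexp (c : ℝ) (x : E) :
    fderiv ℝ (fun x : E => Real.exp (-‖x‖ ^ 2 / c)) x =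
      (-(2 / c) * Real.exp (-‖x‖ ^ 2 / c)) • innerSL ℝ x :=
  (hasFDerivAt_wexp c x).fderiv

lemma toDual_symm_innerSL (x : E) : (InnerProductSpace.toDual ℝ (EuclideanSpace ℝ (Fin N))).symm (innerSL ℝ x) = x := by
  apply (InnerProductSpace.toDual ℝ (EuclideanSpace ℝ (Fin N))).injective
  rw [LinearIsometryEquiv.apply_symm_apply]
  ext y
  simp [InnerProductSpace.toDual_apply_apply]

lemma norm_gradient_eq (f : E → ℝ) (x : E) : ‖gradient f x‖ = ‖fderiv ℝ f x‖ := by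
  rw [gradient]
  exact LinearIsometryEquiv.norm_map _ _

lemma inner_gradient_eq (f : E → ℝ) (x y : E) :
    (inner ℝ (gradient f x) y : ℝ) = fderiv ℝ f x y := by
  rw [gradient]
  exact InnerProductSpace.toDual_symm_apply

lemma gradient_v (u : E → ℝ) (hu : ContDiff ℝ (⊤ : ℕ∞) u) (x : E) :
    gradient (fun y : E => u y * Real.exp (-‖y‖ ^ 2 / 8)) x
      = Real.exp (-‖x‖ ^ 2 / 8) • gradient u x
        - ((u x * Real.exp (-‖x‖ ^ 2 / 8)) / 4) • x := by
  have hdu : DifferentiableAt ℝ u x := (hu.differentiable (by simp)) x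
  have hdw : DifferentiableAt ℝ (fun y : E => Real.exp (-‖y‖ ^ 2 / 8)) x :=
    (hasFDerivAt_wexp 8 x).differentiableAt
  rw [gradient, fderiv_fun_mul hdu hdw, (hasFDerivAt_wexp 8 x).fderiv, gradient]
  rw [smul_smul, map_add, LinearIsometryEquiv.map_smul, LinearIsometryEquiv.map_smul,
    toDual_symm_innerSL]
  rw [sub_eq_add_neg, add_comm]
  congr 1
  rw [← neg_smul]
  congr 1
  ring

lemma normsq_gradient_v (u : E → ℝ) (hu : ContDiff ℝ (⊤ : ℕ∞) u) (x : E) :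
    ‖gradient (fun y : E => u y * Real.exp (-‖y‖ ^ 2 / 8)) x‖ ^ 2
      = ‖gradient u x‖ ^ 2 * Real.exp (-‖x‖ ^ 2 / 4)
        - (u x * fderiv ℝ u x x) * Real.exp (-‖x‖ ^ 2 / 4) / 2
        + u x ^ 2 * ‖x‖ ^ 2 * Real.exp (-‖x‖ ^ 2 / 4) / 16 := by
  have hw2 : Real.exp (-‖x‖ ^ 2 / 8) * Real.exp (-‖x‖ ^ 2 / 8) = Real.exp (-‖x‖ ^ 2 / 4) := by
    rw [← Real.exp_add]; ring_nf
  rw [gradient_v u hu x, norm_sub_sq_real]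
  rw [norm_smul, norm_smul, real_inner_smul_left, real_inner_smul_right,
    inner_gradient_eq]
  simp only [Real.norm_eq_abs, abs_of_pos (Real.exp_pos _)]
  rw [mul_pow, mul_pow, sq_abs]
  linear_combination (‖gradient u x‖ ^ 2 - u x * (fderiv ℝ u x) x / 2 + u x ^ 2 * ‖x‖ ^ 2 / 16) * hw2

lemma sum_single_eq (x : E) :
    ∑ i : Fin N, x i • EuclideanSpace.single i (1 : ℝ) = x := by
  simpa using (EuclideanSpace.basisFun (Fin N) ℝ).sum_repr x

lemma normsq_eq_sum (x : E) : ‖x‖ ^ 2 = ∑ i : Fin N, x i ^ 2 := by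
  rw [← real_inner_self_eq_norm_sq, PiLp.inner_apply]
  simp [sq]

lemma integ_helper {u f : E → ℝ} (hu : HasCompactSupport u) (hf : Continuous f)
    (hsupp : Function.support f ⊆ tsupport u) : Integrable f volume :=
  hf.integrable_of_hasCompactSupport (HasCompactSupport.of_support_subset_isCompact hu hsupp)

lemma ibp (φ : E → ℝ) (hφ : ContDiff ℝ (⊤ : ℕ∞) φ) (hφc : HasCompactSupport φ) :
    ∫ x : E, fderiv ℝ φ x x * Real.exp (-‖x‖ ^ 2 / 4)
      = ∫ x : E, φ x * (‖x‖ ^ 2 / 2 - N) * Real.exp (-‖x‖ ^ 2 / 4) := by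
  set ψ : E → ℝ := fun x => Real.exp (-‖x‖ ^ 2 / 4) with hψdef
  have hψcont : Continuous ψ := (contDiff_wexp 4).continuous
  set e : Fin N → E := fun i => EuclideanSpace.single i (1 : ℝ) with he
  set g : Fin N → E → ℝ := fun i y => y i * ψ y with hg
  have hφd : Differentiable ℝ φ := hφ.differentiable (by simp)
  have hφcont : Continuous φ := hφ.continuous
  have hDφcont : ∀ i, Continuous (fun x : E => fderiv ℝ φ x (e i)) := fun i =>
    (hφ.continuous_fderiv (by simp)).clm_apply continuous_const
  have hgd : ∀ i, Differentiable ℝ (g i) := fun i =>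
    ((EuclideanSpace.proj (𝕜 := ℝ) i).differentiable).mul ((contDiff_wexp 4).differentiable (by simp))
  have hgcont : ∀ i, Continuous (g i) := fun i =>
    ((EuclideanSpace.proj (𝕜 := ℝ) i).continuous).mul hψcont
  -- derivative of g i in direction e i
  have hgi' : ∀ i (x : E), fderiv ℝ (g i) x (e i) = ψ x - x i ^ 2 * ψ x / 2 := by
    intro i x
    have hdψ : DifferentiableAt ℝ ψ x := (hasFDerivAt_wexp 4 x).differentiableAt
    have hdp : DifferentiableAt ℝ (fun y : E => y i) x :=
      (EuclideanSpace.proj (𝕜 := ℝ) i).differentiableAt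
    have : fderiv ℝ (g i) x = x i • fderiv ℝ ψ x + ψ x • fderiv ℝ (fun y : E => y i) x :=
      fderiv_mul hdp hdψ
    rw [this, (hasFDerivAt_wexp 4 x).fderiv]
    have hproj : fderiv ℝ (fun y : E => y i) x = EuclideanSpace.proj (𝕜 := ℝ) i :=
      (EuclideanSpace.proj (𝕜 := ℝ) i).fderiv
    rw [hproj]
    simp only [ContinuousLinearMap.add_apply, ContinuousLinearMap.smul_apply,
      innerSL_apply_apply, smul_eq_mul]
    have h1 : (inner ℝ x (e i) : ℝ) = x i := by
      simp [he, EuclideanSpace.inner_single_right]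
    have h2 : EuclideanSpace.proj (𝕜 := ℝ) i (e i) = (1 : ℝ) := by
      simp [he]
    rw [h1, h2]
    ring
  -- pointwise expansion of the left integrand
  have step1 : ∀ x : E, fderiv ℝ φ x x * ψ x
      = ∑ i : Fin N, fderiv ℝ φ x (e i) * g i x := by
    intro x
    have h := map_sum (fderiv ℝ φ x) (fun i => x i • e i) Finset.univ
    rw [sum_single_eq] at h
    rw [h]
    rw [Finset.sum_mul]
    congr 1; funext i
    rw [(fderiv ℝ φ x).map_smul, hg]
    simp only [smul_eq_mul]
    ring
  -- integrability of generic pieces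
  have hInt1 : ∀ i, Integrable (fun x : E => fderiv ℝ φ x (e i) * g i x) volume := by
    intro i
    refine integ_helper hφc ((hDφcont i).mul (hgcont i)) ?_
    intro x hx
    have : fderiv ℝ φ x ≠ 0 := by
      intro h0
      apply hx
      simp [h0]
    exact support_fderiv_subset ℝ this
  have hInt2 : ∀ i, Integrable (fun x : E => φ x * fderiv ℝ (g i) x (e i)) volume := by
    intro i
    have hcont : Continuous (fun x : E => φ x * fderiv ℝ (g i) x (e i)) := by
      have : (fun x : E => φ x * fderiv ℝ (g i) x (e i))
          = fun x : E => φ x * (ψ x - x i ^ 2 * ψ x / 2) := by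
        funext x; rw [hgi']
      rw [this]
      exact hφcont.mul ((hψcont.sub ((((EuclideanSpace.proj (𝕜 := ℝ) i).continuous.pow 2).mul hψcont).div_const 2)))
    refine integ_helper hφc hcont ?_
    intro x hx
    have : φ x ≠ 0 := by
      intro h0; apply hx; simp [h0]
    exact subset_tsupport φ this
  have hInt3 : ∀ i, Integrable (fun x : E => φ x * g i x) volume := by
    intro i
    refine integ_helper hφc (hφcont.mul (hgcont i)) ?_
    intro x hx
    have : φ x ≠ 0 := by
      intro h0; apply hx; simp [h0]
    exact subset_tsupport φ this
  -- IBP in each coordinate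
  have step2 : ∀ i : Fin N,
      ∫ x : E, fderiv ℝ φ x (e i) * g i x = -∫ x : E, φ x * fderiv ℝ (g i) x (e i) := by
    intro i
    have h := integral_mul_fderiv_eq_neg_fderiv_mul_of_integrable
      (f := φ) (g := g i) (v := e i) (μ := volume) (hInt1 i) (hInt2 i) (hInt3 i) (fun x _ => hφd x) (fun x _ => hgd i x)
    linarith [h]
  calc ∫ x : E, fderiv ℝ φ x x * ψ x
      = ∫ x : E, ∑ i : Fin N, fderiv ℝ φ x (e i) * g i x := by
        exact integral_congr_ae (Filter.Eventually.of_forall step1)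
    _ = ∑ i : Fin N, ∫ x : E, fderiv ℝ φ x (e i) * g i x := by
        exact integral_finset_sum _ (fun i _ => hInt1 i)
    _ = ∑ i : Fin N, -∫ x : E, φ x * fderiv ℝ (g i) x (e i) := by
        exact Finset.sum_congr rfl (fun i _ => step2 i)
    _ = -∫ x : E, ∑ i : Fin N, φ x * fderiv ℝ (g i) x (e i) := by
        rw [integral_finset_sum _ (fun i _ => hInt2 i), Finset.sum_neg_distrib]
    _ = ∫ x : E, φ x * (‖x‖ ^ 2 / 2 - N) * ψ x := by
        rw [← integral_neg]
        refine integral_congr_ae (Filter.Eventually.of_forall fun x => ?_)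
        simp only [hgi']
        rw [← Finset.mul_sum]
        rw [Finset.sum_sub_distrib]
        rw [← Finset.sum_div, ← Finset.sum_mul, ← normsq_eq_sum]
        simp only [Finset.sum_const, Finset.card_univ, Fintype.card_fin, nsmul_eq_mul]
        ring

lemma gradient_continuous (f : E → ℝ) (hf : ContDiff ℝ (⊤ : ℕ∞) f) : Continuous (gradient f) := by
  have : gradient f = fun x => (InnerProductSpace.toDual ℝ (EuclideanSpace ℝ (Fin N))).symm (fderiv ℝ f x) := rfl
  rw [this]
  exact (InnerProductSpace.toDual ℝ (EuclideanSpace ℝ (Fin N))).symm.continuous.comp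
    (hf.continuous_fderiv (by simp))

lemma gradient_support (f : E → ℝ) :
    Function.support (gradient f) ⊆ tsupport f := by
  intro x hx
  apply support_fderiv_subset ℝ (f := f)
  intro h0
  apply hx
  show (InnerProductSpace.toDual ℝ (EuclideanSpace ℝ (Fin N))).symm (fderiv ℝ f x) = 0
  rw [h0]
  simp

lemma energy_bound (hN : 3 ≤ N) (u : E → ℝ) (hu : ContDiff ℝ (⊤ : ℕ∞) u) (huc : HasCompactSupport u) :
    ∫ x : E, ‖gradient (fun y : E => u y * Real.exp (-‖y‖ ^ 2 / 8)) x‖ ^ 2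
      ≤ N * ∫ x : E, (‖gradient u x‖ ^ 2 + u x ^ 2) * Real.exp (-‖x‖ ^ 2 / 4) := by
  set ψ : E → ℝ := fun x => Real.exp (-‖x‖ ^ 2 / 4) with hψdef
  have hψcont : Continuous ψ := (contDiff_wexp 4).continuous
  have hucont : Continuous u := hu.continuous
  have hud : Differentiable ℝ u := hu.differentiable (by simp)
  have hgradcont : Continuous (gradient u) := gradient_continuous u hu
  have hDcont : Continuous (fun x : E => fderiv ℝ u x x) :=
    (hu.continuous_fderiv (by simp)).clm_apply continuous_id
  -- integrability
  have hI1 : Integrable (fun x : E => ‖gradient u x‖ ^ 2 * ψ x) volume := by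
    refine integ_helper huc (((hgradcont.norm).pow 2).mul hψcont) ?_
    intro x hx
    have : gradient u x ≠ 0 := by
      intro h0; apply hx; simp [h0]
    exact gradient_support u this
  have hI2 : Integrable (fun x : E => u x ^ 2 * ψ x) volume := by
    refine integ_helper huc ((hucont.pow 2).mul hψcont) ?_
    intro x hx
    have : u x ≠ 0 := by intro h0; apply hx; simp [h0]
    exact subset_tsupport u this
  have hI3 : Integrable (fun x : E => u x ^ 2 * ‖x‖ ^ 2 * ψ x) volume := by
    refine integ_helper huc (((hucont.pow 2).mul (continuous_norm.pow 2)).mul hψcont) ?_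
    intro x hx
    have : u x ≠ 0 := by intro h0; apply hx; simp [h0]
    exact subset_tsupport u this
  have hIcross : Integrable (fun x : E => (u x * fderiv ℝ u x x) * ψ x) volume := by
    refine integ_helper huc (((hucont.mul hDcont)).mul hψcont) ?_
    intro x hx
    have : u x ≠ 0 := by intro h0; apply hx; simp [h0]
    exact subset_tsupport u this
  -- IBP applied to φ = u ^ 2
  have hφ : ContDiff ℝ (⊤ : ℕ∞) (fun y : E => u y ^ 2) := hu.pow 2
  have hφc : HasCompactSupport (fun y : E => u y ^ 2) := by
    have : (fun y : E => u y ^ 2) = fun y : E => u y * u y := by funext y; ring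
    rw [this]
    exact huc.mul_left
  have hibp := ibp (fun y : E => u y ^ 2) hφ hφc
  have hfderivsq : ∀ x : E, fderiv ℝ (fun y : E => u y ^ 2) x x = 2 * u x * fderiv ℝ u x x := by
    intro x
    have : (fun y : E => u y ^ 2) = fun y : E => u y * u y := by funext y; ring
    rw [this, fderiv_fun_mul (hud x) (hud x)]
    simp only [ContinuousLinearMap.add_apply, ContinuousLinearMap.smul_apply, smul_eq_mul]
    ring
  have hcrossval : ∫ x : E, (u x * fderiv ℝ u x x) * ψ x
      = (∫ x : E, u x ^ 2 * ‖x‖ ^ 2 * ψ x) / 4 - (N : ℝ) * (∫ x : E, u x ^ 2 * ψ x) / 2 := by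
    have lhs : ∫ x : E, fderiv ℝ (fun y : E => u y ^ 2) x x * ψ x
        = 2 * ∫ x : E, (u x * fderiv ℝ u x x) * ψ x := by
      rw [← integral_const_mul]
      refine integral_congr_ae (Filter.Eventually.of_forall fun x => ?_)
      simp only [hfderivsq]
      ring
    have rhs : ∫ x : E, (fun y : E => u y ^ 2) x * (‖x‖ ^ 2 / 2 - N) * ψ x
        = (∫ x : E, u x ^ 2 * ‖x‖ ^ 2 * ψ x) / 2 - (N : ℝ) * ∫ x : E, u x ^ 2 * ψ x := by
      have : (fun x : E => u x ^ 2 * (‖x‖ ^ 2 / 2 - N) * ψ x)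
          = fun x : E => (u x ^ 2 * ‖x‖ ^ 2 * ψ x) / 2 - (N : ℝ) * (u x ^ 2 * ψ x) := by
        funext x; ring
      rw [this, integral_sub (hI3.div_const 2) (hI2.const_mul _), integral_div,
        integral_const_mul]
    rw [lhs, rhs] at hibp
    linarith
  -- expansion of the gradient-squared integral
  have hexp : ∫ x : E, ‖gradient (fun y : E => u y * Real.exp (-‖y‖ ^ 2 / 8)) x‖ ^ 2
      = (∫ x : E, ‖gradient u x‖ ^ 2 * ψ x)
        - (∫ x : E, (u x * fderiv ℝ u x x) * ψ x) / 2
        + (∫ x : E, u x ^ 2 * ‖x‖ ^ 2 * ψ x) / 16 := by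
    have : (fun x : E => ‖gradient (fun y : E => u y * Real.exp (-‖y‖ ^ 2 / 8)) x‖ ^ 2)
        = fun x : E => ‖gradient u x‖ ^ 2 * ψ x - (u x * fderiv ℝ u x x) * ψ x / 2
            + u x ^ 2 * ‖x‖ ^ 2 * ψ x / 16 := by
      funext x
      exact normsq_gradient_v u hu x
    rw [this]
    have h2 : Integrable (fun x : E => ‖gradient u x‖ ^ 2 * ψ x
        - u x * fderiv ℝ u x x * ψ x / 2) volume := hI1.sub (hIcross.div_const 2)
    rw [integral_add h2 (hI3.div_const 16), integral_sub hI1 (hIcross.div_const 2),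
      integral_div, integral_div]
  have hsplit : ∫ x : E, (‖gradient u x‖ ^ 2 + u x ^ 2) * ψ x
      = (∫ x : E, ‖gradient u x‖ ^ 2 * ψ x) + ∫ x : E, u x ^ 2 * ψ x := by
    have : (fun x : E => (‖gradient u x‖ ^ 2 + u x ^ 2) * ψ x)
        = fun x : E => ‖gradient u x‖ ^ 2 * ψ x + u x ^ 2 * ψ x := by
      funext x; ring
    rw [this, integral_add hI1 hI2]
  have h1n : (0 : ℝ) ≤ ∫ x : E, ‖gradient u x‖ ^ 2 * ψ x :=
    integral_nonneg fun x => mul_nonneg (sq_nonneg _) (Real.exp_pos _).le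
  have h2n : (0 : ℝ) ≤ ∫ x : E, u x ^ 2 * ψ x :=
    integral_nonneg fun x => mul_nonneg (sq_nonneg _) (Real.exp_pos _).le
  have h3n : (0 : ℝ) ≤ ∫ x : E, u x ^ 2 * ‖x‖ ^ 2 * ψ x :=
    integral_nonneg fun x => mul_nonneg (mul_nonneg (sq_nonneg _) (sq_nonneg _)) (Real.exp_pos _).le
  have hN3 : (3 : ℝ) ≤ (N : ℝ) := by exact_mod_cast hN
  rw [hexp, hcrossval, hsplit]
  have haux1 : (0 : ℝ) ≤ ((N : ℝ) - 1) * ∫ x : E, ‖gradient u x‖ ^ 2 * ψ x :=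
    mul_nonneg (by linarith) h1n
  have haux2 : (0 : ℝ) ≤ (3 * (N : ℝ) / 4) * ∫ x : E, u x ^ 2 * ψ x :=
    mul_nonneg (by linarith) h2n
  nlinarith [h3n]

lemma sobolev_real (hN : 3 ≤ N) : ∃ K : ℝ, 0 ≤ K ∧
    ∀ v : E → ℝ, ContDiff ℝ (⊤ : ℕ∞) v → HasCompactSupport v →
      (∫ x : E, |v x| ^ (2 * (N : ℝ) / ((N : ℝ) - 2))) ^ ((2 : ℝ) / (2 * (N : ℝ) / ((N : ℝ) - 2)))
        ≤ K * ∫ x : E, ‖gradient v x‖ ^ 2 := by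
  have hN0 : (0 : ℝ) < N := by positivity
  have hN2 : (0 : ℝ) < (N : ℝ) - 2 := by
    have : (3 : ℝ) ≤ (N : ℝ) := by exact_mod_cast hN
    linarith
  set pR : ℝ := 2 * (N : ℝ) / ((N : ℝ) - 2) with hpR
  have hpRpos : 0 < pR := by positivity
  set p' : ℝ≥0 := ⟨pR, hpRpos.le⟩ with hp'def
  set K0 : ℝ≥0 := SNormLESNormFDerivOfEqConst (F := ℝ)
    (volume : Measure (EuclideanSpace ℝ (Fin N))) 2 with hK0
  refine ⟨(K0 : ℝ) ^ 2, by positivity, fun v hv hvc => ?_⟩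
  have hv1 : ContDiff ℝ 1 v := hv.of_le (by simp)
  have hn : 0 < Module.finrank ℝ (EuclideanSpace ℝ (Fin N)) := by
    rw [finrank_euclideanSpace_fin]; omega
  have hp' : ((p' : ℝ))⁻¹ = ((2 : ℝ≥0) : ℝ)⁻¹ - (Module.finrank ℝ (EuclideanSpace ℝ (Fin N)) : ℝ)⁻¹ := by
    rw [finrank_euclideanSpace_fin]
    show pR⁻¹ = (2 : ℝ)⁻¹ - (N : ℝ)⁻¹
    rw [hpR]
    field_simp
  have hsob := eLpNorm_le_eLpNorm_fderiv_of_eq (μ := (volume : Measure (EuclideanSpace ℝ (Fin N))))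
    hv1 hvc (p := 2) (p' := p') (by norm_num) hn hp'
  have hcoe2 : ((2 : ℝ≥0) : ℝ≥0∞) = (2 : ℝ≥0∞) := by norm_cast
  rw [hcoe2] at hsob
  -- convert both sides to real integrals
  have hvmem : MemLp v p' (volume : Measure (EuclideanSpace ℝ (Fin N))) :=
    hv.continuous.memLp_of_hasCompactSupport hvc
  have hdvmem : MemLp (fderiv ℝ v) 2 (volume : Measure (EuclideanSpace ℝ (Fin N))) :=
    (hv.continuous_fderiv (by simp)).memLp_of_hasCompactSupport (hvc.fderiv (𝕜 := ℝ))
  have hp'0 : (p' : ℝ≥0∞) ≠ 0 :=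
    ENNReal.coe_ne_zero.mpr (fun h => hpRpos.ne' (congrArg NNReal.toReal h))
  have h1 := hvmem.eLpNorm_eq_integral_rpow_norm hp'0 ENNReal.coe_ne_top
  have h2 := hdvmem.eLpNorm_eq_integral_rpow_norm (by norm_num) (by norm_num)
  rw [h1, h2] at hsob
  have htoReal : ((p' : ℝ≥0∞)).toReal = pR := by exact ENNReal.coe_toReal p'
  rw [htoReal] at hsob
  have h2toReal : ((2 : ℝ≥0∞)).toReal = (2 : ℝ) := by norm_num
  rw [h2toReal] at hsob
  -- pass to reals
  set A : ℝ := (∫ x : E, ‖v x‖ ^ pR) ^ pR⁻¹ with hA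
  set B : ℝ := (∫ x : E, ‖fderiv ℝ v x‖ ^ (2 : ℝ)) ^ (2 : ℝ)⁻¹ with hB
  have hAnn : 0 ≤ A := by
    apply Real.rpow_nonneg
    exact integral_nonneg fun x => Real.rpow_nonneg (norm_nonneg _) _
  have hBnn : 0 ≤ B := by
    apply Real.rpow_nonneg
    exact integral_nonneg fun x => Real.rpow_nonneg (norm_nonneg _) _
  have hreal : A ≤ (K0 : ℝ) * B := by
    have := ENNReal.toReal_mono ?_ hsob
    · rwa [ENNReal.toReal_ofReal hAnn, ENNReal.toReal_mul, ENNReal.toReal_ofReal hBnn,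
        ENNReal.coe_toReal] at this
    · exact ENNReal.mul_ne_top ENNReal.coe_ne_top ENNReal.ofReal_ne_top
  -- square it
  have hsq : A ^ (2 : ℕ) ≤ ((K0 : ℝ) * B) ^ (2 : ℕ) := by
    apply pow_le_pow_left₀ hAnn hreal
  have hB2 : B ^ (2 : ℕ) = ∫ x : E, ‖gradient v x‖ ^ 2 := by
    rw [hB, ← Real.rpow_natCast ((∫ x : E, ‖fderiv ℝ v x‖ ^ (2:ℝ)) ^ (2:ℝ)⁻¹) 2,
      ← Real.rpow_mul (integral_nonneg fun x => Real.rpow_nonneg (norm_nonneg _) _)]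
    norm_num
    refine integral_congr_ae (Filter.Eventually.of_forall fun x => ?_)
    simp [norm_gradient_eq]
  have hA2 : A ^ (2 : ℕ) = (∫ x : E, |v x| ^ pR) ^ ((2:ℝ) / pR) := by
    have hint : (∫ x : E, ‖v x‖ ^ pR) = ∫ x : E, |v x| ^ pR := by
      simp only [Real.norm_eq_abs]
    rw [hA, hint, ← Real.rpow_natCast ((∫ x : E, |v x| ^ pR) ^ pR⁻¹) 2,
      ← Real.rpow_mul (integral_nonneg fun x => Real.rpow_nonneg (abs_nonneg _) _)]
    congr 1
    push_cast; ring
  calc (∫ x : E, |v x| ^ pR) ^ ((2:ℝ) / pR) = A ^ (2 : ℕ) := hA2.symm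
    _ ≤ ((K0 : ℝ) * B) ^ (2 : ℕ) := hsq
    _ = (K0 : ℝ) ^ 2 * B ^ (2 : ℕ) := by ring
    _ = (K0 : ℝ) ^ 2 * ∫ x : E, ‖gradient v x‖ ^ 2 := by rw [hB2]

end GaussianWeightedSobolevAux

set_option maxHeartbeats 1000000 in
open GaussianWeightedSobolevAux in
/-- For smooth compactly supported `u`, the function `x ↦ u(x) e^{-|x|²/8}` belongs to
`H¹(ℝ^N)` (i.e. it and its gradient are in `L²`); consequently for every
`s ∈ [2, 2N/(N-2)]` there is `C_s > 0`, independent of `u`, such that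
`(∫ |u|^s e^{-s|x|²/8})^{2/s} ≤ C_s ∫ (|∇u|² + u²) e^{-|x|²/4}`. -/
theorem gaussian_weighted_sobolev {N : ℕ} (hN : 3 ≤ N) :
    (∀ u : EuclideanSpace ℝ (Fin N) → ℝ, ContDiff ℝ (⊤ : ℕ∞) u → HasCompactSupport u →
      MemLp (fun x => u x * Real.exp (-‖x‖ ^ 2 / 8)) 2 (volume) ∧
      MemLp (fun x => gradient (fun y => u y * Real.exp (-‖y‖ ^ 2 / 8)) x) 2 (volume)) ∧
    (∀ s : ℝ, s ∈ Set.Icc (2 : ℝ) (2 * (N : ℝ) / ((N : ℝ) - 2)) → ∃ C > (0 : ℝ),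
      ∀ u : EuclideanSpace ℝ (Fin N) → ℝ, ContDiff ℝ (⊤ : ℕ∞) u → HasCompactSupport u →
        (∫ x, |u x| ^ s * Real.exp (-s * ‖x‖ ^ 2 / 8)) ^ (2 / s) ≤
          C * ∫ x, (‖gradient u x‖ ^ 2 + (u x) ^ 2) * Real.exp (-‖x‖ ^ 2 / 4)) := by
  have hN2 : (0 : ℝ) < (N : ℝ) - 2 := by
    have : (3 : ℝ) ≤ (N : ℝ) := by exact_mod_cast hN
    linarith
  constructor
  · -- membership in H¹
    intro u hu huc
    have hv : ContDiff ℝ (⊤ : ℕ∞) (fun x : EuclideanSpace ℝ (Fin N) => u x * Real.exp (-‖x‖ ^ 2 / 8)) :=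
      hu.mul (contDiff_wexp 8)
    have hvc : HasCompactSupport (fun x : EuclideanSpace ℝ (Fin N) => u x * Real.exp (-‖x‖ ^ 2 / 8)) :=
      huc.mul_right
    refine ⟨hv.continuous.memLp_of_hasCompactSupport hvc, ?_⟩
    have hcont := gradient_continuous (N := N) _ hv
    have hsupp := gradient_support (N := N) (fun x => u x * Real.exp (-‖x‖ ^ 2 / 8))
    exact hcont.memLp_of_hasCompactSupport
      (HasCompactSupport.of_support_subset_isCompact hvc hsupp)
  · -- the weighted Sobolev inequality
    intro s hs
    obtain ⟨K, hK0, hKs⟩ := sobolev_real hN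
    set pR : ℝ := 2 * (N : ℝ) / ((N : ℝ) - 2) with hpRdef
    have hpR2 : 2 < pR := by
      rw [hpRdef, lt_div_iff₀ hN2]; linarith
    have hKN0 : (0 : ℝ) ≤ K * N := by positivity
    refine ⟨K * N + 1, by positivity, fun u hu huc => ?_⟩
    set v : EuclideanSpace ℝ (Fin N) → ℝ := fun x => u x * Real.exp (-‖x‖ ^ 2 / 8) with hvdef
    have hv : ContDiff ℝ (⊤ : ℕ∞) v := hu.mul (contDiff_wexp 8)
    have hvc : HasCompactSupport v := huc.mul_right
    have hvcont : Continuous v := hv.continuous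
    set ψ : EuclideanSpace ℝ (Fin N) → ℝ := fun x => Real.exp (-‖x‖ ^ 2 / 4) with hψdef
    set R : ℝ := ∫ x, (‖gradient u x‖ ^ 2 + u x ^ 2) * ψ x with hRdef
    have hgradcont := gradient_continuous (N := N) u hu
    have hRint : Integrable (fun x : EuclideanSpace ℝ (Fin N) =>
        (‖gradient u x‖ ^ 2 + u x ^ 2) * ψ x) volume := by
      refine integ_helper huc
        ((((hgradcont.norm).pow 2).add (hu.continuous.pow 2)).mul
          ((contDiff_wexp 4).continuous)) ?_
      intro x hx
      by_contra hxt
      apply hx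
      have h1 : u x = 0 := image_eq_zero_of_notMem_tsupport hxt
      have h2 : gradient u x = 0 := by
        by_contra h
        exact hxt (gradient_support (N := N) u h)
      simp [h1, h2]
    have hRnn : 0 ≤ R :=
      integral_nonneg fun x => mul_nonneg (by positivity) (Real.exp_pos _).le
    have hvsq : ∀ x, v x ^ 2 = u x ^ 2 * ψ x := by
      intro x
      have he : Real.exp (-‖x‖ ^ 2 / 8) * Real.exp (-‖x‖ ^ 2 / 8) = Real.exp (-‖x‖ ^ 2 / 4) := by
        rw [← Real.exp_add]; ring_nf
      show (u x * Real.exp (-‖x‖ ^ 2 / 8)) ^ 2 = u x ^ 2 * Real.exp (-‖x‖ ^ 2 / 4)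
      rw [← he]; ring
    set A : ℝ := ∫ x, u x ^ 2 * ψ x with hAdef
    have hAint : Integrable (fun x : EuclideanSpace ℝ (Fin N) => u x ^ 2 * ψ x) volume := by
      refine integ_helper huc ((hu.continuous.pow 2).mul ((contDiff_wexp 4).continuous)) ?_
      intro x hx
      have : u x ≠ 0 := by intro h0; apply hx; simp [h0]
      exact subset_tsupport u this
    have hAnn : 0 ≤ A :=
      integral_nonneg fun x => mul_nonneg (sq_nonneg _) (Real.exp_pos _).le
    have hAleR : A ≤ R := by
      refine integral_mono hAint hRint fun x => ?_
      have : u x ^ 2 ≤ ‖gradient u x‖ ^ 2 + u x ^ 2 := by nlinarith [sq_nonneg ‖gradient u x‖]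
      exact mul_le_mul_of_nonneg_right this (Real.exp_pos _).le
    -- Sobolev + energy
    have hsob := hKs v hv hvc
    have henergy := energy_bound hN u hu huc
    have hgradnn : 0 ≤ ∫ x, ‖gradient v x‖ ^ 2 :=
      integral_nonneg fun x => sq_nonneg _
    set B : ℝ := ∫ x, |v x| ^ pR with hBdef
    have hBnn : 0 ≤ B :=
      integral_nonneg fun x => Real.rpow_nonneg (abs_nonneg _) _
    have hBR : B ^ ((2 : ℝ) / pR) ≤ (K * N) * R := by
      calc B ^ ((2 : ℝ) / pR) ≤ K * ∫ x, ‖gradient v x‖ ^ 2 := hsob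
        _ ≤ K * ((N : ℝ) * R) := mul_le_mul_of_nonneg_left henergy hK0
        _ = (K * N) * R := by ring
    have hDnn : 0 ≤ B ^ ((2 : ℝ) / pR) := Real.rpow_nonneg hBnn _
    -- rewrite the LHS
    have hLHS : (∫ x, |u x| ^ s * Real.exp (-s * ‖x‖ ^ 2 / 8)) = ∫ x, |v x| ^ s := by
      refine integral_congr_ae (Filter.Eventually.of_forall fun x => ?_)
      show |u x| ^ s * Real.exp (-s * ‖x‖ ^ 2 / 8) = |v x| ^ s
      rw [hvdef]
      show |u x| ^ s * Real.exp (-s * ‖x‖ ^ 2 / 8) = |u x * Real.exp (-‖x‖ ^ 2 / 8)| ^ s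
      rw [abs_mul, abs_of_pos (Real.exp_pos _),
        Real.mul_rpow (abs_nonneg _) (Real.exp_pos _).le, ← Real.exp_mul]
      congr 2
      ring
    rw [hLHS]
    have hs2 := hs.1
    have hspR : s ≤ pR := hs.2
    have hs0 : (0 : ℝ) < s := by linarith
    obtain h2s | h2s := eq_or_lt_of_le hs2
    · -- s = 2
      subst h2s
      have h22 : (2 : ℝ) / 2 = 1 := by norm_num
      rw [h22, Real.rpow_one]
      have hiv : (∫ x, |v x| ^ (2 : ℝ)) = A := by
        refine integral_congr_ae (Filter.Eventually.of_forall fun x => ?_)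
        show |v x| ^ (2 : ℝ) = u x ^ 2 * ψ x
        rw [show (2 : ℝ) = ((2 : ℕ) : ℝ) by norm_num, Real.rpow_natCast, sq_abs, hvsq]
      rw [hiv]
      nlinarith
    · obtain hsp | hsp := eq_or_lt_of_le hspR
      · -- s = pR
        rw [hsp, ← hBdef]
        calc B ^ ((2 : ℝ) / pR) ≤ (K * N) * R := hBR
          _ ≤ (K * N + 1) * R := by nlinarith
      · -- 2 < s < pR : interpolation via Hölder
        have hpRs : (0 : ℝ) < pR - 2 := by linarith
        set t : ℝ := (pR - s) / (pR - 2) with htdef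
        have ht0 : 0 < t := div_pos (by linarith) hpRs
        have ht1 : t < 1 := (div_lt_one hpRs).mpr (by linarith)
        have hkey : 2 * t + pR * (1 - t) = s := by
          rw [htdef]; field_simp; ring
        set P : ℝ := 1 / t with hPdef
        set Q : ℝ := 1 / (1 - t) with hQdef
        have ht1' : 0 < 1 - t := by linarith
        have hconj : Real.HolderConjugate P Q := by
          rw [Real.holderConjugate_iff]
          constructor
          · rw [hPdef, lt_div_iff₀ ht0]; linarith
          · rw [hPdef, hQdef, one_div, one_div, inv_inv, inv_inv]; ring
        set f : EuclideanSpace ℝ (Fin N) → ℝ := fun x => |v x| ^ (2 * t) with hfdef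
        set g : EuclideanSpace ℝ (Fin N) → ℝ := fun x => |v x| ^ (pR * (1 - t)) with hgdef
        have hfc : Continuous f :=
          (hvcont.abs).rpow_const fun x => Or.inr (by positivity)
        have hgc : Continuous g :=
          (hvcont.abs).rpow_const fun x => Or.inr (by positivity)
        have hfsupp : Function.support f ⊆ tsupport v := by
          intro x hx
          apply subset_tsupport v
          intro h0
          apply hx
          rw [hfdef]
          show |v x| ^ (2 * t) = 0
          rw [h0, abs_zero, Real.zero_rpow (by positivity)]
        have hgsupp : Function.support g ⊆ tsupport v := by
          intro x hx
          apply subset_tsupport v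
          intro h0
          apply hx
          rw [hgdef]
          show |v x| ^ (pR * (1 - t)) = 0
          rw [h0, abs_zero, Real.zero_rpow (by positivity)]
        have hfmem : MemLp f (ENNReal.ofReal P) volume :=
          hfc.memLp_of_hasCompactSupport
            (HasCompactSupport.of_support_subset_isCompact hvc hfsupp)
        have hgmem : MemLp g (ENNReal.ofReal Q) volume :=
          hgc.memLp_of_hasCompactSupport
            (HasCompactSupport.of_support_subset_isCompact hvc hgsupp)
        have hH := integral_mul_le_Lp_mul_Lq_of_nonneg hconj
          (Filter.Eventually.of_forall fun x => Real.rpow_nonneg (abs_nonneg _) _)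
          (Filter.Eventually.of_forall fun x => Real.rpow_nonneg (abs_nonneg _) _)
          hfmem hgmem
        -- identify the three integrals
        have hfg : (∫ x, f x * g x) = ∫ x, |v x| ^ s := by
          refine integral_congr_ae (Filter.Eventually.of_forall fun x => ?_)
          show f x * g x = |v x| ^ s
          rw [hfdef, hgdef]
          show |v x| ^ (2 * t) * |v x| ^ (pR * (1 - t)) = |v x| ^ s
          rw [← Real.rpow_add' (abs_nonneg _) (by rw [hkey]; exact hs0.ne'), hkey]
        have hfP : (∫ x, f x ^ P) = A := by
          refine integral_congr_ae (Filter.Eventually.of_forall fun x => ?_)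
          show f x ^ P = u x ^ 2 * ψ x
          rw [hfdef]
          show (|v x| ^ (2 * t)) ^ P = u x ^ 2 * ψ x
          rw [← Real.rpow_mul (abs_nonneg _)]
          have : 2 * t * P = 2 := by rw [hPdef]; field_simp
          rw [this, show (2 : ℝ) = ((2 : ℕ) : ℝ) by norm_num, Real.rpow_natCast, sq_abs, hvsq]
        have hgQ : (∫ x, g x ^ Q) = B := by
          refine integral_congr_ae (Filter.Eventually.of_forall fun x => ?_)
          show g x ^ Q = |v x| ^ pR
          rw [hgdef]
          show (|v x| ^ (pR * (1 - t))) ^ Q = |v x| ^ pR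
          rw [← Real.rpow_mul (abs_nonneg _)]
          congr 1
          rw [hQdef]; field_simp
        rw [hfg, hfP, hgQ] at hH
        -- raise to the power 2/s
        have hvsnn : (0 : ℝ) ≤ ∫ x, |v x| ^ s :=
          integral_nonneg fun x => Real.rpow_nonneg (abs_nonneg _) _
        have hmain : (∫ x, |v x| ^ s) ^ ((2 : ℝ) / s)
            ≤ (A ^ (1 / P) * B ^ (1 / Q)) ^ ((2 : ℝ) / s) :=
          Real.rpow_le_rpow hvsnn hH (by positivity)
        set α : ℝ := (1 / P) * (2 / s) with hαdef
        set γ : ℝ := pR * (1 - t) / s with hγdef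
        have hα0 : 0 ≤ α := by positivity
        have hγ0 : 0 ≤ γ := by positivity
        have hα : α = 2 * t / s := by
          rw [hαdef, hPdef, one_div_one_div]; ring
        have hαγ : α + γ = 1 := by
          rw [hα, hγdef, ← add_div, hkey, div_self hs0.ne']
        have hγ1 : γ ≤ 1 := by linarith
        have hrhs : (A ^ (1 / P) * B ^ (1 / Q)) ^ ((2 : ℝ) / s)
            = A ^ α * (B ^ ((2 : ℝ) / pR)) ^ γ := by
          rw [Real.mul_rpow (Real.rpow_nonneg hAnn _) (Real.rpow_nonneg hBnn _),
            ← Real.rpow_mul hAnn, ← Real.rpow_mul hBnn, ← Real.rpow_mul hBnn]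
          congr 2
          rw [hγdef, hQdef, one_div_one_div]
          have hpR0 : pR ≠ 0 := by positivity
          have hri : 2 / pR * (pR * (1 - t) / s) = (pR / pR) * ((1 - t) * (2 / s)) := by ring
          rw [hri, div_self hpR0, one_mul]
        have hfinal : A ^ α * (B ^ ((2 : ℝ) / pR)) ^ γ ≤ (K * N + 1) * R := by
          have h1 : A ^ α ≤ R ^ α := Real.rpow_le_rpow hAnn hAleR hα0
          have h2 : (B ^ ((2 : ℝ) / pR)) ^ γ ≤ ((K * N) * R) ^ γ :=
            Real.rpow_le_rpow hDnn hBR hγ0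
          have h3 : A ^ α * (B ^ ((2 : ℝ) / pR)) ^ γ ≤ R ^ α * ((K * N) * R) ^ γ :=
            mul_le_mul h1 h2 (Real.rpow_nonneg hDnn _) (Real.rpow_nonneg hRnn _)
          have h4 : R ^ α * ((K * N) * R) ^ γ = (K * N) ^ γ * R := by
            rw [Real.mul_rpow hKN0 hRnn, ← mul_assoc, mul_comm (R ^ α), mul_assoc,
              ← Real.rpow_add' hRnn (by rw [hαγ]; norm_num), hαγ, Real.rpow_one]
          have h5 : (K * N) ^ γ ≤ K * N + 1 := by
            rcases le_or_gt (K * N) 1 with h | h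
            · have := Real.rpow_le_one hKN0 h hγ0
              linarith
            · have := Real.rpow_le_rpow_of_exponent_le h.le hγ1
              rw [Real.rpow_one] at this
              linarith
          calc A ^ α * (B ^ ((2 : ℝ) / pR)) ^ γ ≤ R ^ α * ((K * N) * R) ^ γ := h3
            _ = (K * N) ^ γ * R := h4
            _ ≤ (K * N + 1) * R := mul_le_mul_of_nonneg_right h5 hRnn
        calc (∫ x, |v x| ^ s) ^ ((2 : ℝ) / s)
            ≤ (A ^ (1 / P) * B ^ (1 / Q)) ^ ((2 : ℝ) / s) := hmain
          _ = A ^ α * (B ^ ((2 : ℝ) / pR)) ^ γ := hrhs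
          _ ≤ (K * N + 1) * R := hfinal
end
end

section
/- Let μ ≥ −((N−2)/2)^2 be a real number, α = (N−2)/2 − √(((N−2)/2)^2 + μ), and let m ∈ N. Define the polynomial P(t) = Σ_{i=0}^{m} ((−m)_i / ((N/2 − α)_i)) t^i / i!, where (s)_i denotes the Pochhammer symbol. Then the function φ(r) = r^{−α} P(r^2/4) solves on (0,∞) the ODE φ'' + ((N−1)/r − r/2) φ' + (γ − μ/r^2) φ = 0, where γ = m − α/2. -/
/-!
In the variable `t = r ^ 2 / 4`, the operator applied to `r ^ (-α) * P t` equals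
`r ^ (-α) * (t P'' + (N/2 - α - t) P' + (γ + α/2) P)`
`+ r ^ (-α - 2) * (α² - (N-2) α - μ) P`.
The second term vanishes because `α` is a root of the indicial equation `α² - (N-2) α = μ`, and
since `γ + α/2 = m` the first is Kummer's equation `t P'' + (b - t) P' + m P = 0` with
`b = N/2 - α = 1 + √(((N-2)/2)² + μ) > 0`. The terminating series `M(-m, b, t)` solves it
coefficientwise, by the Pochhammer recurrence `(b + j) c_{j+1} = (j - m) c_j`.
-/

open Real Set Finset

noncomputable section

open Polynomial

section Kummer

open scoped Nat

def kummerCoeff (m : ℕ) (b : ℝ) (i : ℕ) : ℝ :=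
  (ascPochhammer ℝ i).eval (-(m : ℝ)) / (ascPochhammer ℝ i).eval b

/-- Kummer's function `M(-m, b, ·)`; the series terminates since `(-m)_i = 0` for `i > m`. -/
def kummerPoly (m : ℕ) (b : ℝ) : ℝ[X] :=
  ∑ i ∈ range (m + 1), C (kummerCoeff m b i / i !) * X ^ i

variable (m : ℕ) (b : ℝ)

lemma kummerCoeff_eq_zero_of_lt {i : ℕ} (hi : m < i) : kummerCoeff m b i = 0 := by
  simp [kummerCoeff, ascPochhammer_eval_neg_coe_nat_of_lt hi]

variable {b}

lemma kummerCoeff_recurrence (hb : 0 < b) (j : ℕ) :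
    (b + j) * kummerCoeff m b (j + 1) = ((j : ℝ) - m) * kummerCoeff m b j := by
  have : (ascPochhammer ℝ j).eval b ≠ 0 := (ascPochhammer_pos j b hb).ne'
  have : b + (j : ℝ) ≠ 0 := by positivity
  simp only [kummerCoeff, ascPochhammer_succ_eval]
  field_simp
  ring

variable (b)

lemma coeff_kummerPoly (n : ℕ) : (kummerPoly m b).coeff n = kummerCoeff m b n / n ! := by
  simp only [kummerPoly, finsetSum_coeff, coeff_C_mul, coeff_X_pow, mul_ite, mul_one, mul_zero,
    sum_ite_eq, Finset.mem_range]
  split_ifs with h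
  · rfl
  · rw [kummerCoeff_eq_zero_of_lt m b (by omega), zero_div]

lemma eval_kummerPoly (t : ℝ) :
    (kummerPoly m b).eval t = ∑ i ∈ range (m + 1), kummerCoeff m b i * t ^ i / i ! := by
  simp only [kummerPoly, eval_finsetSum, eval_mul, eval_C, eval_X, eval_pow]
  exact sum_congr rfl fun i _ => by ring

variable {b}

lemma kummerPoly_coeff_recurrence (hb : 0 < b) (n : ℕ) :
    (n + 1) * (b + n) * (kummerPoly m b).coeff (n + 1)
      = ((n : ℝ) - m) * (kummerPoly m b).coeff n := by
  rw [coeff_kummerPoly, coeff_kummerPoly, Nat.factorial_succ, Nat.cast_mul, mul_div_assoc',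
    mul_div_assoc', ← kummerCoeff_recurrence m hb n]
  push_cast
  field_simp

theorem kummerPoly_kummer_equation (hb : 0 < b) :
    X * derivative (derivative (kummerPoly m b)) + (C b - X) * derivative (kummerPoly m b)
      + C (m : ℝ) * kummerPoly m b = 0 := by
  ext n
  rcases n with _ | n
  · simp only [map_natCast, coeff_add, mul_coeff_zero, coeff_X_zero, coeff_derivative, zero_add,
      Nat.cast_one, CharP.cast_eq_zero, mul_one, zero_mul, coeff_sub, coeff_C_zero, sub_zero,
      coeff_natCast_ite, if_true, coeff_zero]
    linear_combination kummerPoly_coeff_recurrence m hb 0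
  · simp only [sub_mul, map_natCast, coeff_add, coeff_X_mul, coeff_derivative, Nat.cast_add,
      Nat.cast_one, coeff_sub, coeff_C_mul, coeff_natCast_mul, coeff_zero]
    have := kummerPoly_coeff_recurrence m hb (n + 1)
    push_cast at this
    linear_combination this

end Kummer

section Radial

variable {a r : ℝ}

lemma hasDerivAt_rpow_neg_mul {F : ℝ → ℝ} {F' : ℝ} (hr : 0 < r) (hF : HasDerivAt F F' r) :
    HasDerivAt (fun s => s ^ (-a) * F s) (r ^ (-a) * (-a / r * F r + F')) r := by
  refine ((hasDerivAt_rpow_const (p := -a) (Or.inl hr.ne')).fun_mul hF).congr_deriv ?_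
  rw [rpow_sub hr, rpow_one]
  ring

lemma hasDerivAt_eval_sq_div_four (p : ℝ[X]) (r : ℝ) :
    HasDerivAt (fun s => p.eval (s ^ 2 / 4)) (r / 2 * (derivative p).eval (r ^ 2 / 4)) r := by
  refine ((p.hasDerivAt (r ^ 2 / 4)).comp r ((hasDerivAt_pow 2 r).div_const 4)).congr_deriv ?_
  push_cast
  ring

theorem radial_operator_rpow_neg_mul_eval {n γ μ : ℝ} (p : ℝ[X]) {φ : ℝ → ℝ}
    (hφ : EqOn φ (fun s => s ^ (-a) * p.eval (s ^ 2 / 4)) (Ioi 0)) (hr : 0 < r) :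
    deriv (deriv φ) r + ((n - 1) / r - r / 2) * deriv φ r + (γ - μ / r ^ 2) * φ r
      = r ^ (-a) * (r ^ 2 / 4 * (derivative (derivative p)).eval (r ^ 2 / 4)
          + (n / 2 - a - r ^ 2 / 4) * (derivative p).eval (r ^ 2 / 4)
          + (γ + a / 2) * p.eval (r ^ 2 / 4))
        + r ^ (-a) / r ^ 2 * (a ^ 2 - (n - 2) * a - μ) * p.eval (r ^ 2 / 4) := by
  set G : ℝ → ℝ := fun s =>
    -a / s * p.eval (s ^ 2 / 4) + s / 2 * (derivative p).eval (s ^ 2 / 4)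
  have hderiv : EqOn (deriv φ) (fun s => s ^ (-a) * G s) (Ioi 0) := fun s hs =>
    ((Filter.eventuallyEq_of_mem (isOpen_Ioi.mem_nhds hs) hφ).deriv_eq).trans
      (hasDerivAt_rpow_neg_mul hs (hasDerivAt_eval_sq_div_four p s)).deriv
  have hG : HasDerivAt G
      (a / r ^ 2 * p.eval (r ^ 2 / 4) + -a / r * (r / 2 * (derivative p).eval (r ^ 2 / 4))
        + (1 / 2 * (derivative p).eval (r ^ 2 / 4)
          + r / 2 * (r / 2 * (derivative (derivative p)).eval (r ^ 2 / 4)))) r := by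
    have hinv : HasDerivAt (fun s => -a / s) (a / r ^ 2) r := by
      refine ((hasDerivAt_inv hr.ne').const_mul (-a)).congr_deriv ?_
      ring
    exact (hinv.mul (hasDerivAt_eval_sq_div_four p r)).add
      (((hasDerivAt_id r).div_const 2).mul (hasDerivAt_eval_sq_div_four (derivative p) r))
  rw [((Filter.eventuallyEq_of_mem (isOpen_Ioi.mem_nhds hr) hderiv).deriv_eq),
    (hasDerivAt_rpow_neg_mul hr hG).deriv, hderiv hr, hφ hr]
  simp only [G]
  field_simp
  ring

end Radial

theorem radial_ode_solution_general {N : ℕ} (μ : ℝ)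
    (hμ : -((((N : ℝ) - 2) / 2) ^ 2) ≤ μ)
    (α : ℝ) (hα : α = ((N : ℝ) - 2) / 2 - Real.sqrt ((((N : ℝ) - 2) / 2) ^ 2 + μ))
    (m : ℕ) (γ : ℝ) (hγ : γ = (m : ℝ) - α / 2)
    (P : ℝ → ℝ)
    (hP : ∀ s : ℝ, P s = ∑ i ∈ Finset.range (m + 1),
      ((ascPochhammer ℝ i).eval (-(m : ℝ)) / (ascPochhammer ℝ i).eval ((N : ℝ) / 2 - α))
        * s ^ i / (Nat.factorial i : ℝ))
    (φ : ℝ → ℝ) (hφ : ∀ r : ℝ, 0 < r → φ r = r ^ (-α) * P (r ^ 2 / 4)) :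
    ∀ r : ℝ, 0 < r →
      deriv (deriv φ) r + (((N : ℝ) - 1) / r - r / 2) * deriv φ r
        + (γ - μ / r ^ 2) * φ r = 0 := by
  intro r hr
  have hsqrt := sq_sqrt (show 0 ≤ (((N : ℝ) - 2) / 2) ^ 2 + μ by linarith)
  have hb : 0 < (N : ℝ) / 2 - α := by
    rw [hα]
    linarith [sqrt_nonneg ((((N : ℝ) - 2) / 2) ^ 2 + μ)]
  have hμ_eq : α ^ 2 - ((N : ℝ) - 2) * α - μ = 0 := by
    rw [hα]
    linear_combination hsqrt
  have hderiv : EqOn φ (fun s => s ^ (-α) * (kummerPoly m ((N : ℝ) / 2 - α)).eval (s ^ 2 / 4))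
      (Ioi 0) := fun s hs => by
    simp only [hφ s hs, hP, eval_kummerPoly]
    rfl
  have hkummer := congrArg (eval (r ^ 2 / 4)) (kummerPoly_kummer_equation m hb)
  simp only [eval_add, eval_mul, eval_sub, eval_X, eval_C, eval_zero] at hkummer
  rw [radial_operator_rpow_neg_mul_eval _ hderiv hr, hγ]
  linear_combination r ^ (-α) * hkummer
    + r ^ (-α) / r ^ 2 * (kummerPoly m ((N : ℝ) / 2 - α)).eval (r ^ 2 / 4) * hμ_eq

/-- Let `μ ≥ -((N-2)/2)²`, `α = (N-2)/2 - √(((N-2)/2)² + μ)`, `m ∈ ℕ`, `γ = m - α/2`, and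
`P(t) = Σ_{i=0}^m ((-m)_i/((N/2-α)_i)) tⁱ/i!` (Pochhammer symbols).  Then
`φ(r) = r^{-α} P(r²/4)` solves `φ'' + ((N-1)/r - r/2) φ' + (γ - μ/r²) φ = 0` on `(0,∞)`. -/
theorem radial_ode_solution {N : ℕ} (hN : 3 ≤ N) (μ : ℝ)
    (hμ : -((((N : ℝ) - 2) / 2) ^ 2) ≤ μ)
    (α : ℝ) (hα : α = ((N : ℝ) - 2) / 2 - Real.sqrt ((((N : ℝ) - 2) / 2) ^ 2 + μ))
    (m : ℕ) (γ : ℝ) (hγ : γ = (m : ℝ) - α / 2)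
    (P : ℝ → ℝ)
    (hP : ∀ s : ℝ, P s = ∑ i ∈ Finset.range (m + 1),
      ((ascPochhammer ℝ i).eval (-(m : ℝ)) / (ascPochhammer ℝ i).eval ((N : ℝ) / 2 - α))
        * s ^ i / (Nat.factorial i : ℝ))
    (φ : ℝ → ℝ) (hφ : ∀ r : ℝ, 0 < r → φ r = r ^ (-α) * P (r ^ 2 / 4)) :
    ∀ r : ℝ, 0 < r →
      deriv (deriv φ) r + (((N : ℝ) - 1) / r - r / 2) * deriv φ r
        + (γ - μ / r ^ 2) * φ r = 0 :=
  radial_ode_solution_general μ hμ α hα m γ hγ P hP φ hφ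
end
end

section
/- Let ψ : S^{N-1} → R satisfy −Δ_{S^{N-1}} ψ − a ψ = μ ψ on S^{N-1}, let α = (N−2)/2 − √(((N−2)/2)^2 + μ) with μ + ((N−2)/2)^2 ≥ 0, let m ∈ N, γ = m − α/2, and P(t) = Σ_{i=0}^m ((−m)_i/((N/2−α)_i)) t^i/i!. Then the function V(x) = |x|^{−α} P(|x|^2/4) ψ(x/|x|) satisfies, on R^N ∖ {0}, the equation −ΔV(x) + (x/2)·∇V(x) − (a(x/|x|)/|x|^2) V(x) = γ V(x). -/
open Real Set Finset MeasureTheory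
open Filter Topology

noncomputable section

/-- The Laplacian as the sum of second partial derivatives. -/
noncomputable def lap {N : ℕ} (f : EuclideanSpace ℝ (Fin N) → ℝ)
    (x : EuclideanSpace ℝ (Fin N)) : ℝ :=
  ∑ i : Fin N, fderiv ℝ (fun y => fderiv ℝ f y (EuclideanSpace.single i 1)) x
    (EuclideanSpace.single i 1)

namespace OUaux

/-- coefficient ratio of the truncated hypergeometric series -/
def cc (b : ℝ) (m i : ℕ) : ℝ :=
  (ascPochhammer ℝ i).eval (-(m:ℝ)) / (ascPochhammer ℝ i).eval b

def dd (b : ℝ) (m i : ℕ) : ℝ := cc b m i * (1/4)^i / (Nat.factorial i : ℝ)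

/-- the radial profile as a function of `s = r²` -/
def GG (b α : ℝ) (m : ℕ) (s : ℝ) : ℝ :=
  ∑ i ∈ Finset.range (m+1), dd b m i * s ^ ((i:ℝ) - α/2)

def GG₁ (b α : ℝ) (m : ℕ) (s : ℝ) : ℝ :=
  ∑ i ∈ Finset.range (m+1), dd b m i * (((i:ℝ) - α/2) * s ^ ((i:ℝ) - α/2 - 1))

def GG₂ (b α : ℝ) (m : ℕ) (s : ℝ) : ℝ :=
  ∑ i ∈ Finset.range (m+1),
    dd b m i * (((i:ℝ) - α/2) * (((i:ℝ) - α/2 - 1) * s ^ ((i:ℝ) - α/2 - 2)))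

lemma poch_pos {b : ℝ} (hb : 0 < b) (i : ℕ) : 0 < (ascPochhammer ℝ i).eval b := by
  induction i with
  | zero => simp
  | succ n ih =>
      rw [ascPochhammer_succ_eval]
      have : (0:ℝ) < b + n := by positivity
      exact mul_pos ih this

lemma cc_rec {b : ℝ} (hb : 0 < b) (m i : ℕ) :
    cc b m (i+1) * (b + i) = cc b m i * ((i:ℝ) - m) := by
  unfold cc
  rw [ascPochhammer_succ_eval, ascPochhammer_succ_eval]
  have h1 : (ascPochhammer ℝ i).eval b ≠ 0 := (poch_pos hb i).ne'
  have h2 : b + (i:ℝ) ≠ 0 := by positivity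
  field_simp
  ring

lemma hasDerivAt_GG (b α : ℝ) (m : ℕ) {s : ℝ} (hs : 0 < s) :
    HasDerivAt (GG b α m) (GG₁ b α m s) s := by
  unfold GG GG₁
  exact HasDerivAt.fun_sum fun i _ =>
    ((Real.hasDerivAt_rpow_const (Or.inl hs.ne')).const_mul _)

lemma hasDerivAt_GG₁ (b α : ℝ) (m : ℕ) {s : ℝ} (hs : 0 < s) :
    HasDerivAt (GG₁ b α m) (GG₂ b α m s) s := by
  unfold GG₁ GG₂
  refine HasDerivAt.fun_sum fun i _ => ?_
  rw [show (i:ℝ) - α/2 - 2 = (i:ℝ) - α/2 - 1 - 1 by ring]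
  simpa [mul_assoc] using
    (((Real.hasDerivAt_rpow_const (p := (i:ℝ) - α/2 - 1) (Or.inl hs.ne'))).const_mul
      (dd b m i * ((i:ℝ) - α/2)))


lemma dd_rec {b : ℝ} (hb : 0 < b) (m i : ℕ) :
    dd b m (i+1) * (-4*((i:ℝ)+1)*(b+i)) = dd b m i * ((m:ℝ) - i) := by
  have hr := cc_rec hb m i
  unfold dd
  rw [Nat.factorial_succ]
  have hf : ((i.factorial : ℕ):ℝ) ≠ 0 := Nat.cast_ne_zero.2 (Nat.factorial_ne_zero i)
  have hi1 : ((i:ℝ)+1) ≠ 0 := by positivity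
  push_cast
  field_simp
  linear_combination (-(1/4:ℝ)^i) * hr


lemma ode {Nr α μ γ b : ℝ} {m : ℕ} (hbdef : b = Nr/2 - α)
    (hb : 0 < b) (hμ : μ = α^2 - (Nr-2)*α) (hγ : γ = (m:ℝ) - α/2)
    {s : ℝ} (hs : 0 < s) :
    -(4*s*GG₂ b α m s) - 2*Nr*GG₁ b α m s + s*GG₁ b α m s
      + μ * GG b α m s / s = γ * GG b α m s := by
  have h1 : ∀ t : ℝ, s ^ t = s ^ (t-1) * s := fun t => by
    rw [← Real.rpow_add_one hs.ne' (t-1)]; ring_nf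
  have hA : -(4*s*GG₂ b α m s) - 2*Nr*GG₁ b α m s + μ * GG b α m s / s
      = ∑ i ∈ Finset.range (m+1),
          dd b m i * (μ - 4*((i:ℝ)-α/2)*((i:ℝ)-α/2-1+Nr/2)) * s ^ ((i:ℝ)-α/2-1) := by
    unfold GG GG₁ GG₂
    rw [Finset.mul_sum, Finset.mul_sum, Finset.mul_sum, Finset.sum_div,
      ← Finset.sum_neg_distrib, ← Finset.sum_sub_distrib, ← Finset.sum_add_distrib]
    refine Finset.sum_congr rfl fun i _ => ?_
    rw [show ((i:ℝ)-α/2-2) = ((i:ℝ)-α/2-1-1) by ring, h1 ((i:ℝ)-α/2), h1 ((i:ℝ)-α/2-1)]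
    field_simp
    ring
  have hB : γ * GG b α m s - s * GG₁ b α m s
      = ∑ i ∈ Finset.range (m+1), dd b m i * (γ - ((i:ℝ)-α/2)) * s ^ ((i:ℝ)-α/2) := by
    unfold GG GG₁
    rw [Finset.mul_sum, Finset.mul_sum, ← Finset.sum_sub_distrib]
    refine Finset.sum_congr rfl fun i _ => ?_
    rw [h1 ((i:ℝ)-α/2)]
    ring
  have core : (∑ i ∈ Finset.range (m+1),
        dd b m i * (μ - 4*((i:ℝ)-α/2)*((i:ℝ)-α/2-1+Nr/2)) * s ^ ((i:ℝ)-α/2-1))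
      = ∑ i ∈ Finset.range (m+1), dd b m i * (γ - ((i:ℝ)-α/2)) * s ^ ((i:ℝ)-α/2) := by
    rw [Finset.sum_range_succ', Finset.sum_range_succ]
    have hz0 : μ - 4*(((0:ℕ):ℝ)-α/2)*(((0:ℕ):ℝ)-α/2-1+Nr/2) = 0 := by
      push_cast; rw [hμ]; ring
    have hzm : γ - ((m:ℝ)-α/2) = 0 := by rw [hγ]; ring
    rw [hz0, hzm]
    simp only [mul_zero, zero_mul, add_zero]
    refine Finset.sum_congr rfl fun i _ => ?_
    have hK : μ - 4*((↑(i+1):ℝ)-α/2)*((↑(i+1):ℝ)-α/2-1+Nr/2) = -4*((i:ℝ)+1)*(b+i) := by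
      rw [hμ, hbdef]; push_cast; ring
    have hexp : (↑(i+1):ℝ) - α/2 - 1 = (i:ℝ)-α/2 := by push_cast; ring
    rw [hK, hexp]
    have hg : γ - ((i:ℝ)-α/2) = (m:ℝ) - i := by rw [hγ]; ring
    rw [hg]
    linear_combination (s ^ ((i:ℝ)-α/2)) * dd_rec hb m i
  linarith [hA, hB, core]


lemma GG_eq {α : ℝ} (b : ℝ) (m : ℕ) {r : ℝ} (hr : 0 < r) :
    GG b α m (r^2) = r ^ (-α) * ∑ i ∈ Finset.range (m+1),
      ((ascPochhammer ℝ i).eval (-(m : ℝ)) / (ascPochhammer ℝ i).eval b)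
        * (r^2/4) ^ i / (Nat.factorial i : ℝ) := by
  have h2 : (0:ℝ) < r^2 := by positivity
  have hrn : (r^2:ℝ) ^ (-α/2 : ℝ) = r ^ (-α) := by
    rw [← Real.rpow_natCast r 2, ← Real.rpow_mul hr.le]
    congr 1
    push_cast
    ring
  have hsplit : ∀ i : ℕ, (r^2) ^ ((i:ℝ)-α/2) = (r^2)^i * ((r^2) ^ (-α/2 : ℝ)) := fun i => by
    rw [show (i:ℝ) - α/2 = (i:ℝ) + (-α/2) by ring, Real.rpow_add h2, Real.rpow_natCast]
  unfold GG dd cc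
  rw [Finset.mul_sum]
  refine Finset.sum_congr rfl fun i _ => ?_
  rw [hsplit i, hrn]
  ring

end OUaux

set_option maxHeartbeats 1000000 in
/-- Eigenfunctions of the Ornstein-Uhlenbeck operator with inverse square potential.
The spherical eigenfunction `ψ` and the angular coefficient `a` are encoded through their
zero-homogeneous extensions `Ψ` and `A` to `ℝ^N ∖ {0}`; the spherical eigen-equation
`-Δ_{S^{N-1}}ψ - aψ = μψ` becomes `-‖x‖² ΔΨ - AΨ = μΨ`.  Then
`V(x) = |x|^{-α} P(|x|²/4) Ψ(x)` satisfies
`-ΔV + (x/2)·∇V - (A(x)/|x|²) V = γ V` on `ℝ^N ∖ {0}`. -/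
theorem ou_eigenfunction {N : ℕ} (hN : 3 ≤ N) (μ : ℝ)
    (hμ : 0 ≤ (((N : ℝ) - 2) / 2) ^ 2 + μ)
    (α : ℝ) (hα : α = ((N : ℝ) - 2) / 2 - Real.sqrt ((((N : ℝ) - 2) / 2) ^ 2 + μ))
    (m : ℕ) (γ : ℝ) (hγ : γ = (m : ℝ) - α / 2)
    (P : ℝ → ℝ)
    (hP : ∀ s : ℝ, P s = ∑ i ∈ Finset.range (m + 1),
      ((ascPochhammer ℝ i).eval (-(m : ℝ)) / (ascPochhammer ℝ i).eval ((N : ℝ) / 2 - α))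
        * s ^ i / (Nat.factorial i : ℝ))
    (A Ψ : EuclideanSpace ℝ (Fin N) → ℝ)
    (hA_cont : ContinuousOn A {(0 : EuclideanSpace ℝ (Fin N))}ᶜ)
    (hA_hom : ∀ c > (0 : ℝ), ∀ x, A (c • x) = A x)
    (hΨ_smooth : ContDiffOn ℝ (⊤ : ℕ∞) Ψ {(0 : EuclideanSpace ℝ (Fin N))}ᶜ)
    (hΨ_hom : ∀ c > (0 : ℝ), ∀ x, Ψ (c • x) = Ψ x)
    (heig : ∀ x : EuclideanSpace ℝ (Fin N), x ≠ 0 →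
      -(‖x‖ ^ 2 * lap Ψ x) - A x * Ψ x = μ * Ψ x)
    (V : EuclideanSpace ℝ (Fin N) → ℝ)
    (hV : ∀ x : EuclideanSpace ℝ (Fin N), x ≠ 0 →
      V x = ‖x‖ ^ (-α) * P (‖x‖ ^ 2 / 4) * Ψ x) :
    ∀ x : EuclideanSpace ℝ (Fin N), x ≠ 0 →
      -(lap V x) + (inner ℝ x (gradient V x) : ℝ) / 2 - A x / ‖x‖ ^ 2 * V x = γ * V x := by
  intro x hx
  classical
  obtain ⟨b, hbdef⟩ : ∃ b : ℝ, b = (N : ℝ)/2 - α := ⟨_, rfl⟩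
  rw [← hbdef] at hP
  have hb : 0 < b := by
    have hs := Real.sqrt_nonneg ((((N : ℝ) - 2) / 2) ^ 2 + μ)
    rw [hbdef, hα]; linarith
  have hμ' : μ = α^2 - ((N:ℝ)-2)*α := by
    have hs : Real.sqrt ((((N : ℝ) - 2) / 2) ^ 2 + μ) ^ 2 = (((N : ℝ) - 2) / 2) ^ 2 + μ :=
      Real.sq_sqrt hμ
    rw [hα]; linear_combination -hs
  have hpos : ∀ y : EuclideanSpace ℝ (Fin N), y ≠ 0 → (0:ℝ) < ‖y‖^2 := by
    intro y hy
    have : 0 < ‖y‖ := norm_pos_iff.2 hy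
    positivity
  have hVW : ∀ y : EuclideanSpace ℝ (Fin N), y ≠ 0 → V y = OUaux.GG b α m (‖y‖^2) * Ψ y := by
    intro y hy
    have hr : 0 < ‖y‖ := norm_pos_iff.2 hy
    rw [hV y hy, hP, OUaux.GG_eq b m hr]
  -- basic smoothness facts for Ψ
  have hΨc : ∀ y : EuclideanSpace ℝ (Fin N), y ≠ 0 → ContDiffAt ℝ (⊤ : ℕ∞) Ψ y := fun y hy =>
    hΨ_smooth.contDiffAt (isOpen_compl_singleton.mem_nhds hy)
  have hΨd : ∀ y : EuclideanSpace ℝ (Fin N), y ≠ 0 → DifferentiableAt ℝ Ψ y := fun y hy =>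
    (hΨc y hy).differentiableAt (by simp)
  have hΨ' : ContDiffAt ℝ 1 (fderiv ℝ Ψ) x := (hΨc x hx).fderiv_right (by exact WithTop.coe_le_coe.2 le_top)
  have hΦd : ∀ i : Fin N, DifferentiableAt ℝ
      (fun z => fderiv ℝ Ψ z (EuclideanSpace.single i 1)) x := fun i =>
    (hΨ'.clm_apply contDiffAt_const).differentiableAt one_ne_zero
  -- Euler identity for the 0-homogeneous Ψ
  have hEuler : ∀ y : EuclideanSpace ℝ (Fin N), y ≠ 0 → fderiv ℝ Ψ y y = 0 := by
    intro y hy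
    have h1 : HasDerivAt (fun t:ℝ => t • y) y 1 := by
      simpa using (hasDerivAt_id (1:ℝ)).smul_const y
    have h2 : HasDerivAt (fun t:ℝ => Ψ (t • y)) (fderiv ℝ Ψ y y) 1 := by
      have h3 : HasFDerivAt Ψ (fderiv ℝ Ψ ((1:ℝ) • y)) ((1:ℝ) • y) := by
        rw [one_smul]; exact (hΨd y hy).hasFDerivAt
      have h4 := h3.comp_hasDerivAt (1:ℝ) h1
      simpa [Function.comp_def, one_smul] using h4
    have h0 : HasDerivAt (fun t:ℝ => Ψ (t • y)) 0 1 := by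
      refine (hasDerivAt_const (1:ℝ) (Ψ y)).congr_of_eventuallyEq ?_
      filter_upwards [Ioi_mem_nhds (by norm_num : (0:ℝ) < 1)] with t ht
      exact hΨ_hom t ht y
    exact h2.unique h0
  -- representation of x in the standard basis
  have hxrep : ∑ i : Fin N, x i • (EuclideanSpace.single i (1:ℝ)) = x := by
    have h := (EuclideanSpace.basisFun (Fin N) ℝ).sum_repr x
    simpa [EuclideanSpace.basisFun_apply, EuclideanSpace.basisFun_repr] using h
  have hLx : ∀ (L : EuclideanSpace ℝ (Fin N) →L[ℝ] ℝ),
      ∑ i : Fin N, x i * L (EuclideanSpace.single i 1) = L x := by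
    intro L
    conv_rhs => rw [← hxrep]
    rw [map_sum]
    simp
  have hsum_sq : ∑ i : Fin N, (x i)^2 = ‖x‖^2 := by
    rw [EuclideanSpace.norm_eq, Real.sq_sqrt (by positivity)]
    simp [sq_abs]
  -- derivative of the product G(‖·‖²)·Ψ
  have hWd : ∀ y : EuclideanSpace ℝ (Fin N), y ≠ 0 →
      HasFDerivAt (fun z => OUaux.GG b α m (‖z‖^2) * Ψ z)
        (OUaux.GG b α m (‖y‖^2) • fderiv ℝ Ψ y +
          Ψ y • (OUaux.GG₁ b α m (‖y‖^2) • (2 • innerSL ℝ y))) y := by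
    intro y hy
    have hq : HasFDerivAt (fun z : EuclideanSpace ℝ (Fin N) => ‖z‖^2) (2 • innerSL ℝ y) y :=
      (hasStrictFDerivAt_norm_sq y).hasFDerivAt
    have hg : HasFDerivAt (fun z : EuclideanSpace ℝ (Fin N) => OUaux.GG b α m (‖z‖^2))
        (OUaux.GG₁ b α m (‖y‖^2) • (2 • innerSL ℝ y)) y := by
      have := (OUaux.hasDerivAt_GG b α m (hpos y hy)).comp_hasFDerivAt y hq
      simpa [Function.comp_def] using this
    exact hg.mul ((hΨd y hy).hasFDerivAt)
  -- first derivative of V in coordinate directions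
  have hfV : ∀ (y : EuclideanSpace ℝ (Fin N)), y ≠ 0 → ∀ i : Fin N,
      fderiv ℝ V y (EuclideanSpace.single i 1)
      = OUaux.GG₁ b α m (‖y‖^2) * (2 * (innerSL ℝ (EuclideanSpace.single i (1:ℝ)) y)) * Ψ y
        + OUaux.GG b α m (‖y‖^2) * fderiv ℝ Ψ y (EuclideanSpace.single i 1) := by
    intro y hy i
    have hev : V =ᶠ[𝓝 y] fun z => OUaux.GG b α m (‖z‖^2) * Ψ z := by
      filter_upwards [isOpen_compl_singleton.mem_nhds hy] with z hz
      exact hVW z hz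
    rw [hev.fderiv_eq, (hWd y hy).fderiv]
    simp [smul_eq_mul, real_inner_comm]
    ring
  -- second derivatives
  have hlapterm : ∀ i : Fin N,
      fderiv ℝ (fun y => fderiv ℝ V y (EuclideanSpace.single i 1)) x (EuclideanSpace.single i 1)
      = OUaux.GG₁ b α m (‖x‖^2) * (2 * x i) * fderiv ℝ Ψ x (EuclideanSpace.single i 1)
        + Ψ x * (OUaux.GG₁ b α m (‖x‖^2) * 2
            + OUaux.GG₂ b α m (‖x‖^2) * (2 * x i) * (2 * x i))
        + (OUaux.GG b α m (‖x‖^2)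
              * fderiv ℝ (fun z => fderiv ℝ Ψ z (EuclideanSpace.single i 1)) x
                  (EuclideanSpace.single i 1)
            + fderiv ℝ Ψ x (EuclideanSpace.single i 1)
              * (OUaux.GG₁ b α m (‖x‖^2) * (2 * x i))) := by
    intro i
    have hev : (fun y => fderiv ℝ V y (EuclideanSpace.single i 1)) =ᶠ[𝓝 x] (fun z =>
        OUaux.GG₁ b α m (‖z‖^2) * (2 * (innerSL ℝ (EuclideanSpace.single i (1:ℝ)) z)) * Ψ z
          + OUaux.GG b α m (‖z‖^2) * fderiv ℝ Ψ z (EuclideanSpace.single i 1)) := by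
      filter_upwards [isOpen_compl_singleton.mem_nhds hx] with z hz
      exact hfV z hz i
    rw [hev.fderiv_eq]
    have hq : HasFDerivAt (fun z : EuclideanSpace ℝ (Fin N) => ‖z‖^2) (2 • innerSL ℝ x) x :=
      (hasStrictFDerivAt_norm_sq x).hasFDerivAt
    have hg0 : HasFDerivAt (fun z : EuclideanSpace ℝ (Fin N) => OUaux.GG b α m (‖z‖^2))
        (OUaux.GG₁ b α m (‖x‖^2) • (2 • innerSL ℝ x)) x := by
      have := (OUaux.hasDerivAt_GG b α m (hpos x hx)).comp_hasFDerivAt x hq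
      simpa [Function.comp_def] using this
    have hg1 : HasFDerivAt (fun z : EuclideanSpace ℝ (Fin N) => OUaux.GG₁ b α m (‖z‖^2))
        (OUaux.GG₂ b α m (‖x‖^2) • (2 • innerSL ℝ x)) x := by
      have := (OUaux.hasDerivAt_GG₁ b α m (hpos x hx)).comp_hasFDerivAt x hq
      simpa [Function.comp_def] using this
    have hh : HasFDerivAt
        (fun z : EuclideanSpace ℝ (Fin N) =>
          (2:ℝ) * (innerSL ℝ (EuclideanSpace.single i (1:ℝ)) z))
        ((2:ℝ) • (innerSL ℝ (EuclideanSpace.single i (1:ℝ)))) x :=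
      ((innerSL ℝ (EuclideanSpace.single i (1:ℝ))).hasFDerivAt).const_mul 2
    have hΦ : HasFDerivAt (fun z => fderiv ℝ Ψ z (EuclideanSpace.single i 1))
        (fderiv ℝ (fun z => fderiv ℝ Ψ z (EuclideanSpace.single i 1)) x) x := (hΦd i).hasFDerivAt
    have htot := ((hg1.mul hh).mul (hΨd x hx).hasFDerivAt).add (hg0.mul hΦ)
    simp only [Pi.mul_def, Pi.add_def] at htot
    rw [htot.fderiv]
    simp [smul_eq_mul, EuclideanSpace.inner_single_left, EuclideanSpace.inner_single_right,
      EuclideanSpace.single_apply, real_inner_comm]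
    ring
  -- assembling the Laplacian
  have hS0 : ∑ i : Fin N, x i * fderiv ℝ Ψ x (EuclideanSpace.single i 1) = 0 := by
    rw [hLx (fderiv ℝ Ψ x), hEuler x hx]
  have hlapΨ : (∑ i : Fin N, fderiv ℝ (fun z => fderiv ℝ Ψ z (EuclideanSpace.single i 1)) x
      (EuclideanSpace.single i 1)) = lap Ψ x := rfl
  have hlap : lap V x = 2*(N:ℝ)*OUaux.GG₁ b α m (‖x‖^2)*Ψ x
      + 4*(‖x‖^2)*OUaux.GG₂ b α m (‖x‖^2)*Ψ x
      + OUaux.GG b α m (‖x‖^2) * lap Ψ x := by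
    have h1 : lap V x = ∑ i : Fin N,
        ((2*OUaux.GG₁ b α m (‖x‖^2)) * (x i * fderiv ℝ Ψ x (EuclideanSpace.single i 1))
          + 2*OUaux.GG₁ b α m (‖x‖^2)*Ψ x
          + (4*OUaux.GG₂ b α m (‖x‖^2)*Ψ x) * (x i)^2
          + OUaux.GG b α m (‖x‖^2)
              * fderiv ℝ (fun z => fderiv ℝ Ψ z (EuclideanSpace.single i 1)) x
                  (EuclideanSpace.single i 1)
          + (2*OUaux.GG₁ b α m (‖x‖^2)) * (x i * fderiv ℝ Ψ x (EuclideanSpace.single i 1))) := by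
      unfold lap
      refine Finset.sum_congr rfl fun i _ => ?_
      rw [hlapterm i]
      ring
    rw [h1, Finset.sum_add_distrib, Finset.sum_add_distrib, Finset.sum_add_distrib,
      Finset.sum_add_distrib, ← Finset.mul_sum, ← Finset.mul_sum, ← Finset.mul_sum,
      ← Finset.mul_sum, hS0, hsum_sq, hlapΨ, Finset.sum_const, Finset.card_univ]
    simp only [Fintype.card_fin, nsmul_eq_mul]
    ring
  -- the gradient term
  have hgrad : (inner ℝ x (gradient V x) : ℝ) = fderiv ℝ V x x := by
    rw [real_inner_comm]
    unfold gradient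
    exact InnerProductSpace.toDual_symm_apply
  have hfVxx : fderiv ℝ V x x = OUaux.GG₁ b α m (‖x‖^2) * (2*‖x‖^2) * Ψ x := by
    have hev : V =ᶠ[𝓝 x] fun z => OUaux.GG b α m (‖z‖^2) * Ψ z := by
      filter_upwards [isOpen_compl_singleton.mem_nhds hx] with z hz
      exact hVW z hz
    rw [hev.fderiv_eq, (hWd x hx).fderiv]
    simp [smul_eq_mul, real_inner_self_eq_norm_sq, hEuler x hx]
    have hss : ∑ i : Fin N, x i * x i = ‖x‖^2 := by
      rw [← hsum_sq]
      exact Finset.sum_congr rfl fun i _ => (sq (x i)).symm ▸ by ring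
    ring
  -- final assembly
  have hodex := OUaux.ode (Nr := (N:ℝ)) (α := α) (μ := μ) (γ := γ) (b := b) (m := m)
    hbdef hb hμ' hγ (hpos x hx)
  have heq := heig x hx
  have hqne : (‖x‖^2 : ℝ) ≠ 0 := (hpos x hx).ne'
  have hlapΨval : lap Ψ x = (-(A x * Ψ x) - μ * Ψ x) / ‖x‖^2 := by
    rw [eq_div_iff hqne]
    linarith [heq]
  rw [hlap, hgrad, hfVxx, hVW x hx, hlapΨval]
  linear_combination Ψ x * hodex
end
end
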